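/- Let V be a partial order viewed as a category, ♭ : V → V monotone with ♭(v) ≤ v and ♭(♭(v)) = ♭(v), and let J be the quantization Grothendieck topology on V. Let b : V ⥤ V denote the functor induced by ♭. Then for every presheaf F : V^op ⥤ Type, the presheaf ♭*F := b.op ⋙ F (so (♭*F)(v) = F(♭(v)), with restriction maps (♭*F)(v' ⟶ v) = F(♭(v') ⟶ ♭(v))) is a sheaf for J. -/

import Mathlib

/-!
The covering sieves on `v` are those containing `ε v : ♭v ⟶ v`, and `♭*F` sends every `ε v` to
`F(♭♭v ⟶ ♭v)`, an isomorphism since `♭♭v = ♭v`. A presheaf inverting every component of a natural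
transformation `ε : G ⟶ 𝟭` is a sheaf for any sieve containing `ε X`: the amalgamation of a
matching family `x` is the preimage of `x (ε X)`, and naturality of `ε` shows that it restricts
correctly.
-/

open CategoryTheory

/-- The quantization Grothendieck topology on a partial order `V` induced by a
monotone idempotent deflation `♭ : V → V`: a sieve on `v` covers iff it contains
the morphism `♭(v) ⟶ v`. -/
def quantTopology {V : Type*} [PartialOrder V] {b : V → V} (hb : Monotone b)
    (hle : ∀ v, b v ≤ v) (hidem : ∀ v, b (b v) = b v) :
    GrothendieckTopology V where
  sieves v := { S | S.arrows (homOfLE (hle v)) }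
  top_mem' v := trivial
  pullback_stable' := by
    intro v v' S f hS
    exact S.downward_closed hS (homOfLE (hb (leOfHom f)))
  transitive' := by
    intro v S hS R hR
    have key : ∀ {x y : V} (_ : x = y) (hx : x ≤ v) (hy : y ≤ v),
        R.arrows (homOfLE hx) → R.arrows (homOfLE hy) := by
      rintro x y rfl hx hy h
      exact h
    exact key (hidem v) ((hle (b v)).trans (hle v)) (hle v) (hR hS)

namespace CategoryTheory.Presieve

variable {C : Type*} [Category C] {G : C ⥤ C} (ε : G ⟶ 𝟭 C) {P : Cᵒᵖ ⥤ Type*}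

theorem isSheafFor_of_mem_of_isIso_map_app (hP : ∀ Y, IsIso (P.map (ε.app Y).op))
    {X : C} {S : Sieve X} (hS : S (ε.app X)) : IsSheafFor P S.arrows := by
  have bij (Y : C) := (isIso_iff_bijective _).1 (hP Y)
  intro x hx
  obtain ⟨t, ht⟩ := (bij X).2 (x _ hS)
  refine ⟨t, fun Y f hf => (bij Y).1 ?_, fun y hy => (bij X).1 ((hy _ hS).trans ht.symm)⟩
  calc P.map (ε.app Y).op (P.map f.op t)
      = P.map (G.map f).op (P.map (ε.app X).op t) := by
        simp only [← Functor.map_comp_apply, ← op_comp, ε.naturality f, Functor.id_map]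
    _ = P.map (ε.app Y).op (x f hf) := by rw [ht]; exact hx _ _ hS hf (ε.naturality f)

end CategoryTheory.Presieve

/-- For every presheaf `F : Vᵒᵖ ⥤ Type`, the presheaf
`♭*F = b.op ⋙ F` (with `(♭*F)(v) = F(♭(v))`) is a sheaf for the quantization
Grothendieck topology. -/
theorem isSheaf_flatStar
    {V : Type*} [PartialOrder V] {b : V → V} (hb : Monotone b)
    (hle : ∀ v, b v ≤ v) (hidem : ∀ v, b (b v) = b v)
    (F : Vᵒᵖ ⥤ Type*) :
    Presieve.IsSheaf (quantTopology hb hle hidem) (hb.functor.op ⋙ F) := by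
  let ε : hb.functor ⟶ 𝟭 V := { app := fun v => homOfLE (hle v) }
  have hε (v : V) : IsIso (hb.functor.map (ε.app v)) :=
    (PartialOrder.isIso_iff_eq _).2 (hidem v)
  intro X S hS
  exact Presieve.isSheafFor_of_mem_of_isIso_map_app ε
    (fun v => inferInstanceAs (IsIso (F.map (hb.functor.map (ε.app v)).op))) hS
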